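/- arXiv:cs/0508112 — 2 statements merged into one kernel-verified Lean document; each statement's English description precedes it below -/
import Mathlib

section
/- Theorem 1 (soundness of extend for the Clique-Sharing domain): let cl₁, cl₂ be clique sets, sh₁, sh₂ be sharing sets, and G a finite set of variables. Let (cl', sh') be any pair satisfying ↓cl' ∪ sh' ⊇ ↓(cl₁_G* ∪ (cl₁_G* ⊎ sh₁_G*)) ∪ (sh₁_G)* (as produced by a sharing-preserving normalization). Define extsh = (sh₁ \ sh₁_G) ∪ {u ∈ sh' : u ∩ G ∈ sh₂}; extcl = rel̄(G, cl₁) ∪ {(C ∩ D) ∪ (C \ G) : C ∈ cl', D ∈ cl₂}; clsh = {u : ∃ C ∈ cl', u ⊆ C and u ∩ G ∈ sh₂}; shcl = {u ∈ sh' : ∃ D ∈ cl₂, u ∩ G ⊆ D}. Then ↓extcl ∪ (extsh ∪ clsh ∪ shcl) ⊇ extend(↓cl₁ ∪ sh₁, G, ↓cl₂ ∪ sh₂). -/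
variable {V : Type*} [DecidableEq V]

/-- `℘⁰(C)`: the set of nonempty subsets of a finite set `C`. -/
def pow0 (C : Finset V) : Set (Finset V) := {u | u ⊆ C ∧ u ≠ ∅}

/-- Concretization of a clique set: `↓cl = ⋃_{C ∈ cl} ℘⁰(C)`. -/
def conc (cl : Set (Finset V)) : Set (Finset V) := ⋃ C ∈ cl, pow0 C

/-- Binary union: `s₁ ⊎ s₂ = {a ∪ b : a ∈ s₁, b ∈ s₂}`. -/
def bin (s₁ s₂ : Set (Finset V)) : Set (Finset V) :=
  {u | ∃ a ∈ s₁, ∃ b ∈ s₂, u = a ∪ b}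

/-- Star union: all unions `⋃ T` over finite nonempty subfamilies `T ⊆ s`. -/
def starU (s : Set (Finset V)) : Set (Finset V) :=
  {u | ∃ T : Finset (Finset V), T.Nonempty ∧ ↑T ⊆ s ∧ u = T.sup id}

/-- `s_G`: the part of `s` relevant to `G` (groups intersecting `G`). -/
def relG (G : Finset V) (s : Set (Finset V)) : Set (Finset V) :=
  {u ∈ s | u ∩ G ≠ ∅}

/-- `rel̄(S, cl) = {C \ S : C ∈ cl} \ {∅}`. -/
def relbar (S : Finset V) (cl : Set (Finset V)) : Set (Finset V) :=
  {d | (∃ C ∈ cl, d = C \ S) ∧ d ≠ ∅}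

/-- `project(G, s) = {u ∩ G : u ∈ s} \ {∅}`. -/
def sproject (G : Finset V) (s : Set (Finset V)) : Set (Finset V) :=
  {d | (∃ u ∈ s, d = u ∩ G) ∧ d ≠ ∅}

/-- Abstract unification of the Sharing domain for `x = t`, `T` the variables of `t`. -/
def amgu (x : V) (T : Finset V) (s : Set (Finset V)) : Set (Finset V) :=
  (s \ relG ({x} ∪ T) s) ∪ bin (starU (relG {x} s)) (starU (relG T s))

/-- The `extend` function of the Sharing domain. -/
def extendSh (Call : Set (Finset V)) (G : Finset V) (Prime : Set (Finset V)) :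
    Set (Finset V) :=
  {u ∈ Call | u ∩ G = ∅} ∪ {u ∈ starU (relG G Call) | u ∩ G ∈ Prime}

/-- Union of all groups of `s` containing `x`, as a set of variables. -/
def occSet (s : Set (Finset V)) (x : V) : Set V :=
  ⋃ u ∈ {u ∈ s | x ∈ u}, (↑u : Set V)

/-!
An element of `extend` either avoids `G`, and then it survives in `rel̄(G, cl₁)` or in
`sh₁ \ sh₁_G`, or it is a union of groups of `(↓cl₁ ∪ sh₁)_G`. In the latter case replace each
group below a clique of `cl₁` by that clique: the union then lies below an element of
`cl₁_G* ∪ (cl₁_G* ⊎ sh₁_G*)` or belongs to `sh₁_G*`, hence, by the normalization hypothesis, it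
lies below a clique `C ∈ cl'` or belongs to `sh'`. Crossing these two alternatives with the two
ways in which `u ∩ G` may belong to `↓cl₂ ∪ sh₂` gives the four remaining parts of the result.
-/

theorem Finset.subset_inter_union_sdiff {α : Type*} [DecidableEq α] {u C D G : Finset α}
    (huC : u ⊆ C) (huD : u ∩ G ⊆ D) : u ⊆ C ∩ D ∪ C \ G := by
  intro x hx
  by_cases hxG : x ∈ G
  · exact Finset.mem_union_left _
      (Finset.mem_inter.2 ⟨huC hx, huD (Finset.mem_inter.2 ⟨hx, hxG⟩)⟩)
  · exact Finset.mem_union_right _ (Finset.mem_sdiff.2 ⟨huC hx, hxG⟩)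

section SetFamily

variable {α : Type*}

theorem mem_conc {cl : Set (Finset α)} {u : Finset α} :
    u ∈ conc cl ↔ ∃ C ∈ cl, u ⊆ C ∧ u ≠ ∅ := by
  simp only [conc, pow0, Set.mem_iUnion, Set.mem_ofPred_eq, exists_prop]

theorem conc_mono {s t : Set (Finset α)} (h : s ⊆ t) : conc s ⊆ conc t := fun _ hu =>
  let ⟨C, hC, huC, hne⟩ := mem_conc.1 hu
  mem_conc.2 ⟨C, h hC, huC, hne⟩

theorem conc_union (s t : Set (Finset α)) : conc (s ∪ t) = conc s ∪ conc t := by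
  simp only [conc, Set.biUnion_union]

variable [DecidableEq α]

theorem starU_mono {s t : Set (Finset α)} (h : s ⊆ t) : starU s ⊆ starU t :=
  fun _ ⟨T, hT, hTs, hu⟩ => ⟨T, hT, hTs.trans h, hu⟩

theorem bin_mono_left {s s' t : Set (Finset α)} (h : s ⊆ s') :
    bin s t ⊆ bin s' t :=
  fun _ ⟨a, ha, b, hb, hu⟩ => ⟨a, h ha, b, hb, hu⟩

theorem starU_union_subset (s t : Set (Finset α)) :
    starU (s ∪ t) ⊆ starU s ∪ starU t ∪ bin (starU s) (starU t) := by
  classical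
  rintro _ ⟨T, hT, hTst, rfl⟩
  set Ts := T.filter (· ∈ s)
  set Tt := T.filter (· ∉ s)
  have hTs : ↑Ts ⊆ s := fun x hx => (Finset.mem_filter.1 hx).2
  have hTt : ↑Tt ⊆ t := fun x hx =>
    (hTst (Finset.mem_filter.1 hx).1).resolve_left (Finset.mem_filter.1 hx).2
  have hsplit : T.sup id = Ts.sup id ⊔ Tt.sup id := by
    rw [← Finset.sup_union, Finset.filter_union_filter_not_eq]
  rcases Ts.eq_empty_or_nonempty with hTs₀ | hTs₀ <;>
    rcases Tt.eq_empty_or_nonempty with hTt₀ | hTt₀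
  · rw [← Finset.filter_union_filter_not_eq (· ∈ s) T] at hT
    simp only [Ts, Tt, hTs₀, hTt₀, Finset.union_empty] at hT
    exact absurd hT Finset.not_nonempty_empty
  · rw [hsplit, hTs₀, Finset.sup_empty, bot_sup_eq]
    exact Or.inl (Or.inr ⟨Tt, hTt₀, hTt, rfl⟩)
  · rw [hsplit, hTt₀, Finset.sup_empty, sup_bot_eq]
    exact Or.inl (Or.inl ⟨Ts, hTs₀, hTs, rfl⟩)
  · exact Or.inr ⟨_, ⟨Ts, hTs₀, hTs, rfl⟩, _, ⟨Tt, hTt₀, hTt, rfl⟩, hsplit⟩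

theorem starU_conc_subset (cl : Set (Finset α)) :
    starU (conc cl) ⊆ conc (starU cl) := by
  rintro _ ⟨T, ⟨t₀, ht₀⟩, hTcl, rfl⟩
  have hclique : ∀ t ∈ T, ∃ C ∈ cl, t ⊆ C ∧ t ≠ ∅ := fun t ht => mem_conc.1 (hTcl ht)
  choose f hfcl hsubf hne using hclique
  refine mem_conc.2 ⟨(T.attach.image fun t => f t.1 t.2).sup id,
    ⟨_, ⟨_, Finset.mem_image_of_mem _ (Finset.mem_attach T ⟨t₀, ht₀⟩)⟩, ?_, rfl⟩, ?_, ?_⟩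
  · intro C hC
    obtain ⟨t, -, rfl⟩ := Finset.mem_image.1 hC
    exact hfcl t.1 t.2
  · refine Finset.sup_le fun t ht => (hsubf t ht).trans ?_
    exact Finset.le_sup (f := id) (Finset.mem_image_of_mem _ (Finset.mem_attach T ⟨t, ht⟩))
  · exact Finset.nonempty_iff_ne_empty.1 <|
      (Finset.nonempty_iff_ne_empty.2 (hne t₀ ht₀)).mono (Finset.le_sup (f := id) ht₀)

theorem bin_conc_subset (s t : Set (Finset α)) :
    bin (conc s) t ⊆ conc (bin s t) := by
  rintro _ ⟨a, ha, b, hb, rfl⟩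
  obtain ⟨C, hC, haC, hne⟩ := mem_conc.1 ha
  exact mem_conc.2 ⟨C ∪ b, ⟨C, hC, b, hb, rfl⟩, Finset.union_subset_union haC le_rfl,
    fun h => hne (Finset.union_eq_empty.1 h).1⟩

theorem relG_union (G : Finset α) (s t : Set (Finset α)) :
    relG G (s ∪ t) = relG G s ∪ relG G t := by
  ext u
  simp only [relG, Set.mem_union, Set.mem_ofPred_eq, or_and_right]

theorem relG_conc_subset (G : Finset α) (cl : Set (Finset α)) :
    relG G (conc cl) ⊆ conc (relG G cl) := by
  rintro u ⟨hu, huG⟩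
  obtain ⟨C, hC, huC, hne⟩ := mem_conc.1 hu
  exact mem_conc.2 ⟨C, ⟨hC, fun h => huG (Finset.subset_empty.1
    (h ▸ Finset.inter_subset_inter_right huC))⟩, huC, hne⟩

theorem starU_relG_conc_union_subset (G : Finset α) (cl sh : Set (Finset α)) :
    starU (relG G (conc cl ∪ sh)) ⊆
      conc (starU (relG G cl) ∪ bin (starU (relG G cl)) (starU (relG G sh)))
        ∪ starU (relG G sh) := by
  have hcl : starU (relG G (conc cl)) ⊆ conc (starU (relG G cl)) :=
    (starU_mono (relG_conc_subset G cl)).trans (starU_conc_subset _)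
  rw [relG_union, conc_union]
  refine (starU_union_subset _ _).trans (Set.union_subset (Set.union_subset ?_ ?_) ?_)
  · exact hcl.trans (Set.subset_union_left.trans Set.subset_union_left)
  · exact Set.subset_union_right
  · exact (bin_mono_left hcl).trans ((bin_conc_subset _ _).trans
      (Set.subset_union_right.trans Set.subset_union_left))

theorem mem_conc_relbar {G u : Finset α} {cl : Set (Finset α)} (hu : u ∈ conc cl)
    (huG : u ∩ G = ∅) : u ∈ conc (relbar G cl) := by
  obtain ⟨C, hC, huC, hne⟩ := mem_conc.1 hu
  have huCG : u ⊆ C \ G := Finset.subset_sdiff.2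
    ⟨huC, Finset.disjoint_iff_inter_eq_empty.2 huG⟩
  exact mem_conc.2 ⟨C \ G, ⟨⟨C, hC, rfl⟩, fun h => hne (Finset.subset_empty.1 (h ▸ huCG))⟩,
    huCG, hne⟩

end SetFamily

/-- Theorem 1: soundness of extend for the Clique-Sharing domain. -/
theorem extend_clique_sharing_sound
    (cl₁ cl₂ cl' : Set (Finset V)) (sh₁ sh₂ sh' : Set (Finset V)) (G : Finset V)
    (hnorm :
      conc (starU (relG G cl₁) ∪ bin (starU (relG G cl₁)) (starU (relG G sh₁)))
        ∪ starU (relG G sh₁) ⊆ conc cl' ∪ sh') :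
    extendSh (conc cl₁ ∪ sh₁) G (conc cl₂ ∪ sh₂) ⊆
      conc (relbar G cl₁ ∪ {e | ∃ C ∈ cl', ∃ D ∈ cl₂, e = (C ∩ D) ∪ (C \ G)})
        ∪ (((sh₁ \ relG G sh₁) ∪ {u ∈ sh' | u ∩ G ∈ sh₂})
            ∪ {u | ∃ C ∈ cl', u ⊆ C ∧ u ∩ G ∈ sh₂}
            ∪ {u ∈ sh' | ∃ D ∈ cl₂, u ∩ G ⊆ D}) := by
  rintro u (⟨hu | hu, huG⟩ | ⟨hu, huG⟩)
  · exact Or.inl (conc_mono Set.subset_union_left (mem_conc_relbar hu huG))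
  · exact Or.inr (Or.inl (Or.inl (Or.inl ⟨hu, fun h => h.2 huG⟩)))
  rcases hnorm (starU_relG_conc_union_subset G cl₁ sh₁ hu) with hu' | hu' <;>
    rcases huG with huG | huG
  · obtain ⟨C, hC, huC, hne⟩ := mem_conc.1 hu'
    obtain ⟨D, hD, huD, -⟩ := mem_conc.1 huG
    exact Or.inl (mem_conc.2 ⟨_, Or.inr ⟨C, hC, D, hD, rfl⟩,
      Finset.subset_inter_union_sdiff huC huD, hne⟩)
  · obtain ⟨C, hC, huC, -⟩ := mem_conc.1 hu'
    exact Or.inr (Or.inl (Or.inr ⟨C, hC, huC, huG⟩))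
  · obtain ⟨D, hD, huD, -⟩ := mem_conc.1 huG
    exact Or.inr (Or.inr ⟨hu', D, hD, huD⟩)
  · exact Or.inr (Or.inl (Or.inl (Or.inr ⟨hu', huG⟩)))
end

section
/- Correctness of the clique-detection test: let cl be a finite family of finite sets of variables and sh a finite set of nonempty finite sets of variables such that the pair (cl, sh) is minimal, i.e., ↓cl ∩ sh = ∅. Then for every finite set S of variables: every nonempty subset of S belongs to ↓cl ∪ sh if and only if |{u ∈ sh : u ⊆ S}| = 2^{|S|} − 1 − [S], where [S] is the number of nonempty subsets of S contained in at least one member of cl. -/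
/-!
The nonempty subsets of `S` split into those in `↓cl`, counted by `[S]`, and the remaining
`2^|S| - 1 - [S]`. Since the groups of `sh` are nonempty and avoid `↓cl`, the groups of `sh`
inside `S` form a subfamily of the remaining ones, so they exhaust them exactly when the two
cardinalities agree.
-/

variable {V : Type*} [DecidableEq V]

open Finset

theorem mem_conc_iff {α : Type*} {cl : Set (Finset α)} {u : Finset α} :
    u ∈ conc cl ↔ u ≠ ∅ ∧ ∃ C ∈ cl, u ⊆ C := by
  simp only [conc, pow0, Set.mem_iUnion, Set.mem_ofPred_eq, exists_prop]
  tauto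

theorem card_filter_powerset_ne_empty (S : Finset V) :
    #(S.powerset.filter (· ≠ ∅)) = 2 ^ #S - 1 := by
  rw [filter_ne', card_erase_of_mem (empty_mem_powerset S), card_powerset]

def subsetsOutsideConc (cl : Finset (Finset V)) (S : Finset V) : Finset (Finset V) :=
  S.powerset.filter (fun u => u ≠ ∅ ∧ ¬∃ C ∈ cl, u ⊆ C)

theorem card_subsetsOutsideConc (cl : Finset (Finset V)) (S : Finset V) :
    (#(subsetsOutsideConc cl S) : ℤ) =
      2 ^ #S - 1 - #(S.powerset.filter (fun u => u ≠ ∅ ∧ ∃ C ∈ cl, u ⊆ C)) := by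
  have hsplit := card_filter_add_card_filter_not (s := S.powerset.filter (· ≠ ∅))
    (fun u => ∃ C ∈ cl, u ⊆ C)
  rw [filter_filter, filter_filter, card_filter_powerset_ne_empty] at hsplit
  have hpos : 1 ≤ 2 ^ #S := Nat.one_le_two_pow
  zify [hpos] at hsplit
  rw [subsetsOutsideConc]
  linarith

theorem filter_subset_subsetsOutsideConc {cl sh : Finset (Finset V)} (hsh : ∀ u ∈ sh, u ≠ ∅)
    (hmin : conc (↑cl : Set (Finset V)) ∩ (↑sh : Set (Finset V)) = ∅) (S : Finset V) :
    sh.filter (· ⊆ S) ⊆ subsetsOutsideConc cl S := by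
  intro u hu
  obtain ⟨hush, huS⟩ := mem_filter.1 hu
  have hconc : u ∉ conc (↑cl : Set (Finset V)) := fun hc =>
    (Set.eq_empty_iff_forall_notMem.1 hmin) u ⟨hc, hush⟩
  rw [mem_conc_iff, not_and] at hconc
  exact mem_filter.2 ⟨mem_powerset.2 huS, hsh u hush, hconc (hsh u hush)⟩

theorem forall_subset_mem_conc_union_iff (cl sh : Finset (Finset V)) (S : Finset V) :
    (∀ u : Finset V, u ⊆ S → u ≠ ∅ → u ∈ conc (↑cl : Set (Finset V)) ∪ (↑sh : Set (Finset V))) ↔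
      subsetsOutsideConc cl S ⊆ sh.filter (· ⊆ S) := by
  simp only [subsetsOutsideConc, subset_iff, mem_filter, mem_powerset, Set.mem_union,
    mem_conc_iff, mem_coe]
  grind

open Finset in
/-- Correctness of the clique-detection test. -/
theorem clique_detection_test (cl : Finset (Finset V)) (sh : Finset (Finset V))
    (hsh : ∀ u ∈ sh, u ≠ ∅)
    (hmin : conc (↑cl : Set (Finset V)) ∩ (↑sh : Set (Finset V)) = ∅) :
    ∀ S : Finset V,
      ((∀ u : Finset V, u ⊆ S → u ≠ ∅ →
          u ∈ conc (↑cl : Set (Finset V)) ∪ (↑sh : Set (Finset V))) ↔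
        ((sh.filter (fun u => u ⊆ S)).card : ℤ) =
          2 ^ S.card - 1 -
            (S.powerset.filter (fun u => u ≠ ∅ ∧ ∃ C ∈ cl, u ⊆ C)).card) := by
  intro S
  have hsub := filter_subset_subsetsOutsideConc hsh hmin S
  rw [forall_subset_mem_conc_union_iff, ← card_subsetsOutsideConc, Nat.cast_inj]
  exact ⟨fun h => congrArg card (hsub.antisymm h),
    fun h => (eq_of_subset_of_card_le hsub h.ge).symm.subset⟩
end
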